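/- arXiv:2408.10519 — 5 statements merged into one kernel-verified Lean document; each statement's English description precedes it below -/
import Mathlib

section
/- Let T be a rooted tree of height h in which the vertices collectively hold k tokens, and consider a synchronous convergecast process where in each round every non-root vertex whose pending-token list is nonempty sends one token to its parent (a vertex's pending list consists of its own initial tokens plus tokens received from children). Then after at most h + k rounds, the root has received every token exactly once. -/
/-!
Let the load at depth `d` be the number of tokens held at depth `≥ d`, and the potential of a
vertex its depth plus the load at its depth. In each round the potential of every nonempty
non-root vertex is smaller than that of some vertex which was nonempty in the previous round, so
potential plus elapsed time stays below `h + k`. Hence after `h + k` rounds every non-root vertex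
is empty, and since tokens are conserved the root holds all of them.
-/

namespace Convergecast

open Finset

variable {V : Type*} [Fintype V]

def children [DecidableEq V] (parent : V → Option V) (v : V) : Finset V :=
  univ.filter (fun u => parent u = some v)

/-- Parent pointers admitting such a depth function are acyclic: they form a rooted forest whose
roots are the parentless vertices. -/
structure IsDepth (parent : V → Option V) (depth : V → ℕ) : Prop where
  eq_zero_of_parent_eq_none : ∀ u, parent u = none → depth u = 0
  eq_succ_of_parent_eq_some : ∀ u p, parent u = some p → depth u = depth p + 1

section Tree

variable [DecidableEq V] {parent : V → Option V} {depth : V → ℕ}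

lemma pairwiseDisjoint_children (B : Set V) : B.PairwiseDisjoint (children parent) := by
  intro p _ q _ hpq
  simp only [Function.onFun, disjoint_left, children, mem_filter, mem_univ, true_and]
  intro u hp hq
  exact hpq (Option.some_injective _ (hp.symm.trans hq))

lemma IsDepth.biUnion_children (hD : IsDepth parent depth) (d : ℕ) :
    (univ.filter (fun v => d ≤ depth v)).biUnion (children parent) =
      univ.filter (fun u => d + 1 ≤ depth u) := by
  ext u
  simp only [children, mem_biUnion, mem_filter, mem_univ, true_and]
  constructor
  · rintro ⟨p, hp, hu⟩
    rw [hD.eq_succ_of_parent_eq_some u p hu]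
    omega
  · intro hu
    cases hpu : parent u with
    | none => rw [hD.eq_zero_of_parent_eq_none u hpu] at hu; omega
    | some p =>
      rw [hD.eq_succ_of_parent_eq_some u p hpu] at hu
      exact ⟨p, by omega, rfl⟩

lemma IsDepth.sum_depth_ge_sum_children {M : Type*} [AddCommMonoid M]
    (hD : IsDepth parent depth) (f : V → M) (d : ℕ) :
    ∑ v with d ≤ depth v, ∑ u ∈ children parent v, f u = ∑ u with d + 1 ≤ depth u, f u := by
  rw [← hD.biUnion_children d, sum_biUnion (pairwiseDisjoint_children _)]

end Tree

lemma sum_depth_ge_eq_add {M : Type*} [AddCommMonoid M] (depth : V → ℕ) (f : V → M) (d : ℕ) :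
    ∑ v with d ≤ depth v, f v = ∑ v with d + 1 ≤ depth v, f v + ∑ v with depth v = d, f v := by
  classical
  rw [← sum_union]
  · congr 1
    ext v
    simp only [mem_filter, mem_univ, true_and, mem_union]
    omega
  · simp only [disjoint_left, mem_filter, mem_univ, true_and]
    omega

section Flow

variable {M : Type*} [AddCommMonoid M] [PartialOrder M] [CanonicallyOrderedAdd M] [Sub M]
  [OrderedSub M] [DecidableEq V] {parent : V → Option V} {depth : V → ℕ}

/-- In a round where every vertex `v` sends `y v` to its parent, the net outflow from depth `≥ d`
is what the vertices at depth exactly `d` send. -/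
lemma IsDepth.sum_depth_ge_round (hD : IsDepth parent depth) {c c' y : V → M}
    (hc' : ∀ v, c' v = c v - y v + ∑ u ∈ children parent v, y u) (hy : y ≤ c) (d : ℕ) :
    ∑ v with d ≤ depth v, c' v + ∑ v with depth v = d, y v = ∑ v with d ≤ depth v, c v := by
  simp only [hc']
  rw [sum_add_distrib, hD.sum_depth_ge_sum_children, add_assoc, ← sum_depth_ge_eq_add,
    ← sum_add_distrib]
  exact sum_congr rfl fun v _ => tsub_add_cancel_of_le (hy v)

lemma IsDepth.sum_round (hD : IsDepth parent depth) {c c' y : V → M}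
    (hc' : ∀ v, c' v = c v - y v + ∑ u ∈ children parent v, y u) (hy : y ≤ c)
    (hroot : ∀ v, depth v = 0 → y v = 0) :
    ∑ v, c' v = ∑ v, c v := by
  have h := hD.sum_depth_ge_round hc' hy 0
  rwa [sum_eq_zero fun v hv => hroot v (mem_filter.1 hv).2, add_zero,
    filter_true_of_mem fun v _ => Nat.zero_le _] at h

end Flow

section Potential

variable {τ : Type*} {parent : V → Option V} {depth : V → ℕ}

def load (depth : V → ℕ) (c : V → Multiset τ) (d : ℕ) : ℕ :=
  ∑ v with d ≤ depth v, (c v).card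

def potential (depth : V → ℕ) (c : V → Multiset τ) (v : V) : ℕ :=
  depth v + load depth c (depth v)

lemma load_eq_load_succ_add (depth : V → ℕ) (c : V → Multiset τ) (d : ℕ) :
    load depth c d = load depth c (d + 1) + ∑ v with depth v = d, (c v).card :=
  sum_depth_ge_eq_add depth _ d

lemma load_le_card_sum (depth : V → ℕ) (c : V → Multiset τ) (d : ℕ) :
    load depth c d ≤ (∑ v, c v).card := by
  rw [Multiset.card_sum]
  exact sum_le_sum_of_subset (filter_subset _ _)

lemma IsDepth.load_round [DecidableEq V] [DecidableEq τ] (hD : IsDepth parent depth)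
    {c c' y : V → Multiset τ}
    (hc' : ∀ v, c' v = c v - y v + ∑ u ∈ children parent v, y u) (hy : y ≤ c) (d : ℕ) :
    load depth c' d + ∑ v with depth v = d, (y v).card = load depth c d := by
  have h := congrArg Multiset.card (hD.sum_depth_ge_round hc' hy d)
  rwa [Multiset.card_add, Multiset.card_sum, Multiset.card_sum, Multiset.card_sum] at h

/-- Either some vertex at the depth of `v` sends a token, which lowers the load, or `v` was empty
and has just received a token from a child, whose potential was one larger. -/
lemma IsDepth.exists_potential_lt [DecidableEq V] [DecidableEq τ] (hD : IsDepth parent depth)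
    {c c' y : V → Multiset τ}
    (hc' : ∀ v, c' v = c v - y v + ∑ u ∈ children parent v, y u) (hy : y ≤ c)
    (hsend : ∀ v, 1 ≤ depth v → c v ≠ 0 → y v ≠ 0) {v : V} (hv : 1 ≤ depth v) (hcv : c' v ≠ 0) :
    ∃ w, 1 ≤ depth w ∧ c w ≠ 0 ∧ potential depth c' v < potential depth c w := by
  have hround := hD.load_round hc' hy (depth v)
  unfold potential
  rcases em (∃ w, depth w = depth v ∧ c w ≠ 0) with ⟨w, hwv, hw⟩ | hlevel
  · have hsent : 1 ≤ ∑ u with depth u = depth v, (y u).card :=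
      (Multiset.card_pos.2 (hsend w (hwv ▸ hv) hw)).trans_le
        (single_le_sum (f := fun u => (y u).card) (fun _ _ => Nat.zero_le _)
          (mem_filter.2 ⟨mem_univ w, hwv⟩))
    refine ⟨w, hwv ▸ hv, hw, ?_⟩
    rw [hwv]
    omega
  · have hempty : ∀ u, depth u = depth v → c u = 0 :=
      fun u hu => by_contra fun h => hlevel ⟨u, hu, h⟩
    have hy_empty : ∀ u, depth u = depth v → y u = 0 :=
      fun u hu => nonpos_iff_eq_zero.1 ((hy u).trans_eq (hempty u hu))
    obtain ⟨u, hu, hyu⟩ : ∃ u ∈ children parent v, y u ≠ 0 := by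
      refine exists_ne_zero_of_sum_ne_zero ?_
      simpa [hc', hempty v rfl, hy_empty v rfl] using hcv
    have hdu : depth u = depth v + 1 :=
      hD.eq_succ_of_parent_eq_some u v (mem_filter.1 hu).2
    have hcu : c u ≠ 0 := fun h => hyu (nonpos_iff_eq_zero.1 ((hy u).trans_eq h))
    have hload : load depth c (depth v) = load depth c (depth v + 1) := by
      rw [load_eq_load_succ_add, sum_eq_zero fun w hw => by rw [hempty w (mem_filter.1 hw).2]; rfl,
        add_zero]
    rw [sum_eq_zero fun w hw => by rw [hy_empty w (mem_filter.1 hw).2]; rfl] at hround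
    refine ⟨u, by omega, hcu, ?_⟩
    rw [hdu]
    omega

end Potential

section Run

variable [DecidableEq V] {τ : Type*} [DecidableEq τ] {parent : V → Option V} {depth : V → ℕ}
  {x y : ℕ → V → Multiset τ}

lemma IsDepth.potential_add_le (hD : IsDepth parent depth)
    (hstep : ∀ i v, x (i + 1) v = x i v - y i v + ∑ u ∈ children parent v, y i u)
    (hy : ∀ i, y i ≤ x i) (hsend : ∀ i v, 1 ≤ depth v → x i v ≠ 0 → y i v ≠ 0) {h k : ℕ}
    (hheight : ∀ v, depth v ≤ h) (hk : (∑ v, x 0 v).card ≤ k) (i : ℕ) :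
    ∀ v, 1 ≤ depth v → x i v ≠ 0 → potential depth (x i) v + i ≤ h + k := by
  induction i with
  | zero =>
    intro v _ _
    have := hheight v
    have := load_le_card_sum depth (x 0) (depth v)
    unfold potential
    omega
  | succ i ih =>
    intro v hv hxv
    obtain ⟨w, hw, hxw, hlt⟩ := hD.exists_potential_lt (hstep i) (hy i) (hsend i) hv hxv
    have := ih w hw hxw
    omega

lemma IsDepth.eq_zero_of_height_add_le (hD : IsDepth parent depth)
    (hstep : ∀ i v, x (i + 1) v = x i v - y i v + ∑ u ∈ children parent v, y i u)
    (hy : ∀ i, y i ≤ x i) (hsend : ∀ i v, 1 ≤ depth v → x i v ≠ 0 → y i v ≠ 0) {h k i : ℕ}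
    (hheight : ∀ v, depth v ≤ h) (hk : (∑ v, x 0 v).card ≤ k) (hi : h + k ≤ i) {v : V}
    (hv : 1 ≤ depth v) : x i v = 0 := by
  by_contra hxv
  have := hD.potential_add_le hstep hy hsend hheight hk i v hv hxv
  unfold potential at this
  omega

lemma IsDepth.sum_eq_sum_zero (hD : IsDepth parent depth)
    (hstep : ∀ i v, x (i + 1) v = x i v - y i v + ∑ u ∈ children parent v, y i u)
    (hy : ∀ i, y i ≤ x i) (hroot : ∀ i v, depth v = 0 → y i v = 0) (i : ℕ) :
    ∑ v, x i v = ∑ v, x 0 v := by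
  induction i with
  | zero => rfl
  | succ i ih => exact (hD.sum_round (hstep i) (hy i) (hroot i)).trans ih

end Run

end Convergecast

theorem convergecast_completes_general {V τ : Type*} [Fintype V] [DecidableEq V] [DecidableEq τ]
    (parent : V → Option V) (r : V) (depth : V → ℕ) (h k : ℕ)
    (honlyroot : ∀ v : V, parent v = none → v = r)
    (hdepth_root : depth r = 0)
    (hdepth : ∀ v u : V, parent v = some u → depth v = depth u + 1)
    (hheight : ∀ v : V, depth v ≤ h)
    (s : ℕ → V → Multiset τ) (sent : ℕ → V → Option τ)
    (hsent_root : ∀ i : ℕ, sent i r = none)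
    (hsent_some : ∀ (i : ℕ) (v : V), v ≠ r → s i v ≠ 0 →
      ∃ t ∈ s i v, sent i v = some t)
    (hsent_none : ∀ (i : ℕ) (v : V), s i v = 0 → sent i v = none)
    (hstep : ∀ (i : ℕ) (v : V), s (i + 1) v =
      (s i v - (sent i v).elim (0 : Multiset τ) (fun t => {t})) +
        ∑ u ∈ Finset.univ.filter (fun u => parent u = some v),
          (sent i u).elim (0 : Multiset τ) (fun t => {t}))
    (hk : (∑ v : V, s 0 v).card = k) :
    s (h + k) r = ∑ v : V, s 0 v := by
  set y : ℕ → V → Multiset τ := fun i v => (sent i v).elim 0 fun t => {t}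
  have hD : Convergecast.IsDepth parent depth :=
    ⟨fun u hu => honlyroot u hu ▸ hdepth_root, hdepth⟩
  have hdepth_pos : ∀ v, 1 ≤ depth v ↔ v ≠ r := fun v => by
    refine ⟨fun hv hvr => by rw [hvr, hdepth_root] at hv; omega, fun hvr => ?_⟩
    cases hp : parent v with
    | none => exact absurd (honlyroot v hp) hvr
    | some p => rw [hdepth v p hp]; omega
  have hy : ∀ i, y i ≤ s i := fun i v => by
    by_cases hz : s i v = 0
    · simp [y, hsent_none i v hz]
    by_cases hvr : v = r
    · simp [y, hvr, hsent_root]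
    obtain ⟨t, ht, hst⟩ := hsent_some i v hvr hz
    simpa [y, hst] using ht
  have hsend : ∀ i v, 1 ≤ depth v → s i v ≠ 0 → y i v ≠ 0 := fun i v hv hz => by
    obtain ⟨t, -, hst⟩ := hsent_some i v ((hdepth_pos v).1 hv) hz
    simp [y, hst]
  have hroot : ∀ i v, depth v = 0 → y i v = 0 := fun i v hv => by
    rw [not_imp_comm.1 (hdepth_pos v).2 (by omega)]
    simp [y, hsent_root]
  rw [← hD.sum_eq_sum_zero hstep hy hroot (h + k), Finset.sum_eq_single r
    (fun v _ hvr => hD.eq_zero_of_height_add_le hstep hy hsend hheight hk.le le_rfl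
      ((hdepth_pos v).2 hvr)) (by simp)]

/-- Synchronous convergecast on a rooted tree of height `h` with `k` tokens in
total: each vertex maintains a multiset of pending tokens (`s i v`); in each
round every non-root vertex with a nonempty pending multiset sends exactly one
of its tokens to its parent (the root absorbs tokens and never sends). Then
after `h + k` rounds the root has received every token exactly once, i.e., its
multiset equals the multiset union of all initial tokens. -/
theorem convergecast_completes {V τ : Type*} [Fintype V] [DecidableEq V] [DecidableEq τ]
    (parent : V → Option V) (r : V) (depth : V → ℕ) (h k : ℕ)
    (hroot : parent r = none)
    (honlyroot : ∀ v : V, parent v = none → v = r)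
    (hdepth_root : depth r = 0)
    (hdepth : ∀ v u : V, parent v = some u → depth v = depth u + 1)
    (hheight : ∀ v : V, depth v ≤ h)
    (s : ℕ → V → Multiset τ) (sent : ℕ → V → Option τ)
    (hsent_root : ∀ i : ℕ, sent i r = none)
    (hsent_some : ∀ (i : ℕ) (v : V), v ≠ r → s i v ≠ 0 →
      ∃ t ∈ s i v, sent i v = some t)
    (hsent_none : ∀ (i : ℕ) (v : V), s i v = 0 → sent i v = none)
    (hstep : ∀ (i : ℕ) (v : V), s (i + 1) v =
      (s i v - (sent i v).elim (0 : Multiset τ) (fun t => {t})) +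
        ∑ u ∈ Finset.univ.filter (fun u => parent u = some v),
          (sent i u).elim (0 : Multiset τ) (fun t => {t}))
    (hk : (∑ v : V, s 0 v).card = k) :
    s (h + k) r = ∑ v : V, s 0 v :=
  convergecast_completes_general parent r depth h k honlyroot hdepth_root hdepth hheight s sent
    hsent_root hsent_some hsent_none hstep hk
end

section
/- In the minimum-propagation process with parent pointers on a connected graph G (each vertex adopts as parent a neighbor from which it first received a strictly smaller value, re-pointing whenever it learns a yet smaller value), suppose all initial values are distinct and let v_min be the vertex with the global minimum. Then after D rounds (D = eccentricity of v_min), the parent pointers form a single spanning tree rooted at v_min, and for every vertex v the directed path from v to v_min in this tree is a shortest path in G. -/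
/-!
After `i` rounds every vertex holds the initial value of some vertex within distance `i`, and
it holds at most the initial value of every vertex within distance `i`. With distinct initial
values, the global minimum therefore reaches `v` exactly at round `dist v vmin`. In that round
the value of `v` changes, which happens only when `v` re-points its parent to a neighbour that
already held the minimum, i.e. to a neighbour at distance `dist v vmin - 1`. From then on the
value of `v` is minimal, so neither it nor the parent of `v` changes again.
-/

namespace SimpleGraph

variable {V : Type*} {G : SimpleGraph V}

theorem Adj.dist_le_dist_add_one {u v r : V} (hadj : G.Adj v u) (hu : G.Reachable u r) :
    G.dist v r ≤ G.dist u r + 1 := by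
  obtain ⟨p, hp⟩ := hu.exists_walk_length_eq_dist
  simpa only [Walk.length_cons, hp] using dist_le (Walk.cons hadj p)

/-- `rid i v` is the value and `par i v` the parent pointer of `v` after round `i`. -/
def IsMinPropagation (G : SimpleGraph V) (rid : ℕ → V → ℕ) (par : ℕ → V → Option V) : Prop :=
  ∀ (i : ℕ) (v : V),
    (∃ u : V, G.Adj v u ∧ rid i u < rid i v ∧
      (∀ w : V, G.Adj v w → rid i u ≤ rid i w) ∧
      rid (i + 1) v = rid i u ∧ par (i + 1) v = some u) ∨
    ((∀ w : V, G.Adj v w → rid i v ≤ rid i w) ∧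
      rid (i + 1) v = rid i v ∧ par (i + 1) v = par i v)

namespace IsMinPropagation

variable {rid : ℕ → V → ℕ} {par : ℕ → V → Option V}

theorem rid_succ_le_of_adj (h : G.IsMinPropagation rid par) {i : ℕ} {v w : V}
    (hvw : G.Adj v w) : rid (i + 1) v ≤ rid i w := by
  rcases h i v with ⟨u, -, -, hu, he, -⟩ | ⟨hv, he, -⟩
  · exact he ▸ hu w hvw
  · exact he ▸ hv w hvw

theorem rid_succ_le (h : G.IsMinPropagation rid par) (i : ℕ) (v : V) :
    rid (i + 1) v ≤ rid i v := by
  rcases h i v with ⟨u, -, hlt, -, he, -⟩ | ⟨-, he, -⟩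
  · exact he ▸ hlt.le
  · exact he.le

theorem antitone_rid (h : G.IsMinPropagation rid par) (v : V) : Antitone (rid · v) :=
  antitone_nat_of_succ_le (h.rid_succ_le · v)

theorem rid_le_of_walk (h : G.IsMinPropagation rid par) {v w : V} (p : G.Walk v w) {i : ℕ}
    (hi : p.length ≤ i) : rid i v ≤ rid 0 w := by
  induction p generalizing i with
  | nil => exact h.antitone_rid _ (Nat.zero_le i)
  | cons hadj q ih =>
    rw [Walk.length_cons] at hi
    obtain ⟨j, rfl⟩ : ∃ j, i = j + 1 := ⟨i - 1, by omega⟩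
    exact (h.rid_succ_le_of_adj hadj).trans (ih (by omega))

theorem exists_walk_rid_eq (h : G.IsMinPropagation rid par) (i : ℕ) (v : V) :
    ∃ w, ∃ p : G.Walk v w, p.length ≤ i ∧ rid i v = rid 0 w := by
  induction i generalizing v with
  | zero => exact ⟨v, Walk.nil, le_rfl, rfl⟩
  | succ i ih =>
    rcases h i v with ⟨u, hadj, -, -, he, -⟩ | ⟨-, he, -⟩
    · obtain ⟨w, p, hp, hw⟩ := ih u
      exact ⟨w, Walk.cons hadj p, by rw [Walk.length_cons]; omega, he.trans hw⟩
    · obtain ⟨w, p, hp, hw⟩ := ih v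
      exact ⟨w, p, by omega, he.trans hw⟩

theorem par_succ_of_rid_succ_eq (h : G.IsMinPropagation rid par) {i : ℕ} {v : V}
    (hv : rid (i + 1) v = rid i v) : par (i + 1) v = par i v := by
  rcases h i v with ⟨u, -, hlt, -, he, -⟩ | ⟨-, -, hpe⟩
  · exact absurd (hv ▸ he ▸ hlt) (lt_irrefl _)
  · exact hpe

theorem exists_par_succ_of_rid_succ_ne (h : G.IsMinPropagation rid par) {i : ℕ} {v : V}
    (hv : rid (i + 1) v ≠ rid i v) :
    ∃ u, G.Adj v u ∧ par (i + 1) v = some u ∧ rid (i + 1) v = rid i u := by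
  rcases h i v with ⟨u, hadj, -, -, he, hpe⟩ | ⟨-, he, -⟩
  · exact ⟨u, hadj, hpe, he⟩
  · exact absurd he hv

variable {r : V}

theorem dist_le_of_rid_eq (h : G.IsMinPropagation rid par) (hinj : Function.Injective (rid 0))
    {i : ℕ} {v : V} (hv : rid i v = rid 0 r) : G.dist v r ≤ i := by
  obtain ⟨w, p, hp, hw⟩ := h.exists_walk_rid_eq i v
  obtain rfl := hinj (hw.symm.trans hv)
  exact (dist_le p).trans hp

theorem rid_eq_of_dist_le (h : G.IsMinPropagation rid par) (hconn : G.Connected)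
    (hmin : ∀ u, rid 0 r ≤ rid 0 u) {i : ℕ} {v : V} (hv : G.dist v r ≤ i) :
    rid i v = rid 0 r := by
  obtain ⟨p, hp⟩ := (hconn v r).exists_walk_length_eq_dist
  obtain ⟨w, -, -, hw⟩ := h.exists_walk_rid_eq i v
  exact le_antisymm (h.rid_le_of_walk p (hp ▸ hv)) (hw ▸ hmin w)

theorem par_succ_of_dist_le (h : G.IsMinPropagation rid par) (hconn : G.Connected)
    (hmin : ∀ u, rid 0 r ≤ rid 0 u) {i : ℕ} {v : V} (hv : G.dist v r ≤ i) :
    par (i + 1) v = par i v :=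
  h.par_succ_of_rid_succ_eq <| by
    rw [h.rid_eq_of_dist_le hconn hmin hv, h.rid_eq_of_dist_le hconn hmin (hv.trans i.le_succ)]

theorem par_root (h : G.IsMinPropagation rid par) (hconn : G.Connected)
    (hmin : ∀ u, rid 0 r ≤ rid 0 u) (hr : par 0 r = none) (i : ℕ) : par i r = none := by
  induction i with
  | zero => exact hr
  | succ i ih => rw [h.par_succ_of_dist_le hconn hmin (by simp), ih]

theorem exists_par_eq_some_of_dist_le (h : G.IsMinPropagation rid par) (hconn : G.Connected)
    (hinj : Function.Injective (rid 0)) (hmin : ∀ u, rid 0 r ≤ rid 0 u) {i : ℕ} {v : V}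
    (hvr : v ≠ r) (hv : G.dist v r ≤ i) :
    ∃ u, par i v = some u ∧ G.Adj v u ∧ G.dist u r + 1 = G.dist v r := by
  induction i with
  | zero => exact absurd (hconn.pos_dist_of_ne hvr) (by omega)
  | succ i ih =>
    by_cases hvi : G.dist v r ≤ i
    · rw [h.par_succ_of_dist_le hconn hmin hvi]
      exact ih hvi
    have hchange : rid (i + 1) v ≠ rid i v := by
      rw [h.rid_eq_of_dist_le hconn hmin hv]
      exact fun hr ↦ hvi (h.dist_le_of_rid_eq hinj hr.symm)
    obtain ⟨u, hadj, hpar, hu⟩ := h.exists_par_succ_of_rid_succ_ne hchange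
    have hui : G.dist u r ≤ i :=
      h.dist_le_of_rid_eq hinj (hu.symm.trans (h.rid_eq_of_dist_le hconn hmin hv))
    have hvu := hadj.dist_le_dist_add_one (hconn u r)
    exact ⟨u, hpar, hadj, by omega⟩

end IsMinPropagation

end SimpleGraph

theorem min_propagation_spanning_tree_general {V : Type*}
    (G : SimpleGraph V) (hconn : G.Connected)
    (idv : V → ℕ) (hinj : Function.Injective idv)
    (vmin : V) (hmin : ∀ u : V, idv vmin ≤ idv u)
    (rid : ℕ → V → ℕ) (par : ℕ → V → Option V)
    (h0 : ∀ v : V, rid 0 v = idv v) (hp0 : ∀ v : V, par 0 v = none)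
    (hupd : ∀ (i : ℕ) (v : V),
      (∃ u : V, G.Adj v u ∧ rid i u < rid i v ∧
        (∀ w : V, G.Adj v w → rid i u ≤ rid i w) ∧
        rid (i + 1) v = rid i u ∧ par (i + 1) v = some u) ∨
      ((∀ w : V, G.Adj v w → rid i v ≤ rid i w) ∧
        rid (i + 1) v = rid i v ∧ par (i + 1) v = par i v))
    (d : ℕ) (hd : ∀ u : V, G.dist u vmin ≤ d) :
    (∀ v : V, rid d v = idv vmin) ∧
    par d vmin = none ∧
    (∀ v : V, v ≠ vmin → ∃ u : V, par d v = some u ∧ G.Adj v u ∧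
      G.dist u vmin + 1 = G.dist v vmin) := by
  obtain rfl : idv = rid 0 := (funext h0).symm
  have h : G.IsMinPropagation rid par := hupd
  exact ⟨fun v ↦ h.rid_eq_of_dist_le hconn hmin (hd v), h.par_root hconn hmin (hp0 vmin) d,
    fun v hv ↦ h.exists_par_eq_some_of_dist_le hconn hinj hmin hv (hd v)⟩

/-- Minimum propagation with parent pointers on a connected graph with distinct
initial values: in each round, a vertex seeing a strictly smaller neighbor value
adopts the smallest such value and re-points its parent to a minimizing
neighbor; otherwise it keeps its value and parent. Let `vmin` hold the global
minimum and let `d` bound the eccentricity of `vmin`. Then after `d` rounds all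
values equal the global minimum, `vmin` has no parent, and every other vertex
has a parent adjacent to it whose distance to `vmin` is one less — i.e., the
parent pointers form a spanning tree rooted at `vmin` all of whose root-paths
are shortest paths in `G`. -/
theorem min_propagation_spanning_tree {V : Type*} [Fintype V]
    (G : SimpleGraph V) (hconn : G.Connected)
    (idv : V → ℕ) (hinj : Function.Injective idv)
    (vmin : V) (hmin : ∀ u : V, idv vmin ≤ idv u)
    (rid : ℕ → V → ℕ) (par : ℕ → V → Option V)
    (h0 : ∀ v : V, rid 0 v = idv v) (hp0 : ∀ v : V, par 0 v = none)
    (hupd : ∀ (i : ℕ) (v : V),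
      (∃ u : V, G.Adj v u ∧ rid i u < rid i v ∧
        (∀ w : V, G.Adj v w → rid i u ≤ rid i w) ∧
        rid (i + 1) v = rid i u ∧ par (i + 1) v = some u) ∨
      ((∀ w : V, G.Adj v w → rid i v ≤ rid i w) ∧
        rid (i + 1) v = rid i v ∧ par (i + 1) v = par i v))
    (d : ℕ) (hd : ∀ u : V, G.dist u vmin ≤ d) :
    (∀ v : V, rid d v = idv vmin) ∧
    par d vmin = none ∧
    (∀ v : V, v ≠ vmin → ∃ u : V, par d v = some u ∧ G.Adj v u ∧
      G.dist u vmin + 1 = G.dist v vmin) :=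
  min_propagation_spanning_tree_general G hconn idv hinj vmin hmin rid par h0 hp0 hupd d hd
end

section
/- In the minimum-propagation process with parent pointers, at the end of every round, the vertex holding a global minimum initial value has no parent (it never adopts a parent), and every vertex in its identifier-induced subtree is connected to it by a directed path that is a shortest path in G; hence that subtree has height at most the diameter D of G. -/
/-!
Let `m` be the global minimum and `t v` the first round at which `v` holds `m`. A vertex holding
`m` passes it to every neighbour in the next round, so `t v ≤ t u + 1` along edges, and hence
`t v ≤ dist v vmin`. A vertex adopts a parent only when it first receives `m`, and then from a
neighbour that already held `m` a round earlier; since values only decrease, the parent has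
`t u = t v - 1`. Thus `t` drops by exactly one along each parent pointer, so a parent chain of
length `n` from `v` to `vmin` is a walk of length `n = t v ≤ dist v vmin`, i.e. a shortest path.
-/

/-- Iterated parent pointers: `parIter p n v` is the vertex reached from `v`
after following `p` exactly `n` times (if defined). -/
def parIter {V : Type*} (p : V → Option V) : ℕ → V → Option V
  | 0, v => some v
  | n + 1, v => (p v).bind (parIter p n)

def IsMinPropagation {V : Type*} (G : SimpleGraph V) (rid : ℕ → V → ℕ)
    (par : ℕ → V → Option V) : Prop :=
  ∀ (i : ℕ) (v : V),
    (∃ u : V, G.Adj v u ∧ rid i u < rid i v ∧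
      (∀ w : V, G.Adj v w → rid i u ≤ rid i w) ∧
      rid (i + 1) v = rid i u ∧ par (i + 1) v = some u) ∨
    ((∀ w : V, G.Adj v w → rid i v ≤ rid i w) ∧
      rid (i + 1) v = rid i v ∧ par (i + 1) v = par i v)

-- junk value `0` if `v` never holds a value `≤ m`
noncomputable def arrivalTime {V : Type*} (rid : ℕ → V → ℕ) (m : ℕ) (v : V) : ℕ :=
  sInf {i | rid i v ≤ m}

theorem arrivalTime_le {V : Type*} {rid : ℕ → V → ℕ} {m i : ℕ} {v : V} (h : rid i v ≤ m) :
    arrivalTime rid m v ≤ i :=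
  Nat.sInf_le h

theorem rid_arrivalTime_le {V : Type*} {rid : ℕ → V → ℕ} {m i : ℕ} {v : V} (h : rid i v ≤ m) :
    rid (arrivalTime rid m v) v ≤ m :=
  Nat.sInf_mem (s := {i | rid i v ≤ m}) ⟨i, h⟩

namespace IsMinPropagation

variable {V : Type*} {G : SimpleGraph V} {rid : ℕ → V → ℕ} {par : ℕ → V → Option V}
  {i m : ℕ} {u v w : V}

theorem rid_succ_le (hP : IsMinPropagation G rid par) (i : ℕ) (v : V) :
    rid (i + 1) v ≤ rid i v := by
  rcases hP i v with ⟨u, -, hlt, -, heq, -⟩ | ⟨-, heq, -⟩ <;> omega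

theorem rid_antitone (hP : IsMinPropagation G rid par) (v : V) : Antitone (rid · v) :=
  antitone_nat_of_succ_le (hP.rid_succ_le · v)

theorem rid_succ_le_of_adj (hP : IsMinPropagation G rid par) (huv : G.Adj v u) :
    rid (i + 1) v ≤ rid i u := by
  rcases hP i v with ⟨u', -, -, hmin, heq, -⟩ | ⟨hmin, heq, -⟩
  · exact heq ▸ hmin u huv
  · exact heq ▸ hmin u huv

theorem le_rid (hP : IsMinPropagation G rid par) (hm : ∀ v, m ≤ rid 0 v) (i : ℕ) (v : V) :
    m ≤ rid i v := by
  induction i generalizing v with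
  | zero => exact hm v
  | succ i ih =>
    rcases hP i v with ⟨u, -, -, -, heq, -⟩ | ⟨-, heq, -⟩
    · exact heq ▸ ih u
    · exact heq ▸ ih v

theorem rid_add_length_le (hP : IsMinPropagation G rid par) (p : G.Walk v w) :
    rid (i + p.length) v ≤ rid i w := by
  induction p with
  | nil => rfl
  | cons huv p ih =>
    rw [SimpleGraph.Walk.length_cons, ← add_assoc]
    exact (hP.rid_succ_le_of_adj huv).trans ih

theorem rid_le_iff_arrivalTime_le (hP : IsMinPropagation G rid par) {j : ℕ}
    (hv : rid j v ≤ m) : rid i v ≤ m ↔ arrivalTime rid m v ≤ i :=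
  ⟨arrivalTime_le, fun h => (hP.rid_antitone v h).trans (rid_arrivalTime_le hv)⟩

theorem arrivalTime_le_succ_of_adj (hP : IsMinPropagation G rid par) (huv : G.Adj v u)
    (hu : rid i u ≤ m) : arrivalTime rid m v ≤ arrivalTime rid m u + 1 :=
  arrivalTime_le ((hP.rid_succ_le_of_adj huv).trans (rid_arrivalTime_le hu))

theorem arrivalTime_le_dist (hP : IsMinPropagation G rid par) (hw : rid 0 w ≤ m)
    (hvw : G.Reachable v w) : arrivalTime rid m v ≤ G.dist v w := by
  obtain ⟨p, hp⟩ := hvw.exists_walk_length_eq_dist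
  have h := hP.rid_add_length_le (i := 0) p
  rw [zero_add, hp] at h
  exact arrivalTime_le (h.trans hw)

theorem rid_eq_and_par_eq_none (hP : IsMinPropagation G rid par) (hpar : ∀ v, par 0 v = none)
    (hmin : ∀ u, rid 0 w ≤ rid 0 u) (i : ℕ) : rid i w = rid 0 w ∧ par i w = none := by
  induction i with
  | zero => exact ⟨rfl, hpar w⟩
  | succ i ih =>
    rcases hP i w with ⟨u, -, hlt, -, -, -⟩ | ⟨-, heq, hpeq⟩
    · exact absurd (hP.le_rid hmin i u) (by omega)
    · exact ⟨heq.trans ih.1, hpeq.trans ih.2⟩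

theorem adj_and_arrivalTime_eq_of_par_eq_some (hP : IsMinPropagation G rid par) (hpar : ∀ v, par 0 v = none)
    (hm : ∀ v, m ≤ rid 0 v) (hvu : par i v = some u) (hv : rid i v ≤ m) :
    G.Adj v u ∧ rid i u ≤ m ∧ arrivalTime rid m v = arrivalTime rid m u + 1 := by
  induction i generalizing v u with
  | zero => simp [hpar] at hvu
  | succ i ih =>
    rcases hP i v with ⟨u', huv, hlt, -, heq, hpeq⟩ | ⟨-, heq, hpeq⟩
    · obtain rfl : u = u' := Option.some.inj (hvu.symm.trans hpeq)
      have hu : rid i u ≤ m := heq ▸ hv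
      have hv_late : ¬ rid i v ≤ m := by have := hP.le_rid hm i u; omega
      have hv_arr : arrivalTime rid m v = i + 1 := by
        have := (hP.rid_le_iff_arrivalTime_le hv).not.mp hv_late
        have := arrivalTime_le hv
        omega
      have := arrivalTime_le hu
      have := hP.arrivalTime_le_succ_of_adj huv hu
      exact ⟨huv, (hP.rid_succ_le i u).trans hu, by omega⟩
    · obtain ⟨huv, hu, harr⟩ := ih (hpeq ▸ hvu) (heq ▸ hv)
      exact ⟨huv, (hP.rid_succ_le i u).trans hu, harr⟩

theorem arrivalTime_eq_and_exists_walk_of_parIter (hP : IsMinPropagation G rid par)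
    (hpar : ∀ v, par 0 v = none) (hm : ∀ v, m ≤ rid 0 v) {n : ℕ}
    (hchain : parIter (par i) n v = some w) (hv : rid i v ≤ m) :
    arrivalTime rid m v = arrivalTime rid m w + n ∧ ∃ p : G.Walk v w, p.length = n := by
  induction n generalizing v with
  | zero =>
    obtain rfl : v = w := Option.some.inj hchain
    exact ⟨rfl, .nil, rfl⟩
  | succ n ih =>
    obtain ⟨u, hvu, hchain⟩ := Option.bind_eq_some_iff.mp hchain
    obtain ⟨huv, hu, harr⟩ := hP.adj_and_arrivalTime_eq_of_par_eq_some hpar hm hvu hv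
    obtain ⟨harr', p, hp⟩ := ih hchain hu
    exact ⟨by omega, .cons huv p, by simp [hp]⟩

end IsMinPropagation

theorem min_subtree_shortest_paths_general {V : Type*}
    (G : SimpleGraph V)
    (idv : V → ℕ) (vmin : V) (hmin : ∀ u : V, idv vmin ≤ idv u)
    (rid : ℕ → V → ℕ) (par : ℕ → V → Option V)
    (h0 : ∀ v : V, rid 0 v = idv v) (hp0 : ∀ v : V, par 0 v = none)
    (hupd : ∀ (i : ℕ) (v : V),
      (∃ u : V, G.Adj v u ∧ rid i u < rid i v ∧
        (∀ w : V, G.Adj v w → rid i u ≤ rid i w) ∧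
        rid (i + 1) v = rid i u ∧ par (i + 1) v = some u) ∨
      ((∀ w : V, G.Adj v w → rid i v ≤ rid i w) ∧
        rid (i + 1) v = rid i v ∧ par (i + 1) v = par i v))
    (D : ℕ) (hD : ∀ u w : V, G.dist u w ≤ D) :
    (∀ i : ℕ, par i vmin = none) ∧
    (∀ (i n : ℕ) (v : V), rid i v = rid i vmin →
      parIter (par i) n v = some vmin →
      n = G.dist v vmin ∧ n ≤ D) := by
  have hP : IsMinPropagation G rid par := hupd
  have hm : ∀ u, rid 0 vmin ≤ rid 0 u := by simpa only [h0] using hmin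
  have hfix := hP.rid_eq_and_par_eq_none hp0 hm
  refine ⟨fun i => (hfix i).2, fun i n v hv hchain => ?_⟩
  obtain ⟨harr, p, hp⟩ :=
    hP.arrivalTime_eq_and_exists_walk_of_parIter hp0 hm hchain (hv.trans (hfix i).1).le
  have hvmin : arrivalTime rid (rid 0 vmin) vmin = 0 := Nat.le_zero.mp (arrivalTime_le le_rfl)
  have hshort := hP.arrivalTime_le_dist le_rfl ⟨p⟩
  have hwalk : G.dist v vmin ≤ n := hp ▸ SimpleGraph.dist_le p
  exact ⟨by omega, by have := hD v vmin; omega⟩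

/-- In the minimum-propagation process with parent pointers, a vertex `vmin`
holding a global minimum initial value never adopts a parent, and every vertex
in its identifier-induced subtree (i.e., reaching `vmin` via parent pointers
with the same current value) is connected to `vmin` by a directed path that is
a shortest path in `G`; hence the subtree has height at most the diameter
bound `D`. -/
theorem min_subtree_shortest_paths {V : Type*} [Fintype V]
    (G : SimpleGraph V) (hconn : G.Connected)
    (idv : V → ℕ) (vmin : V) (hmin : ∀ u : V, idv vmin ≤ idv u)
    (rid : ℕ → V → ℕ) (par : ℕ → V → Option V)
    (h0 : ∀ v : V, rid 0 v = idv v) (hp0 : ∀ v : V, par 0 v = none)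
    (hupd : ∀ (i : ℕ) (v : V),
      (∃ u : V, G.Adj v u ∧ rid i u < rid i v ∧
        (∀ w : V, G.Adj v w → rid i u ≤ rid i w) ∧
        rid (i + 1) v = rid i u ∧ par (i + 1) v = some u) ∨
      ((∀ w : V, G.Adj v w → rid i v ≤ rid i w) ∧
        rid (i + 1) v = rid i v ∧ par (i + 1) v = par i v))
    (D : ℕ) (hD : ∀ u w : V, G.dist u w ≤ D) :
    (∀ i : ℕ, par i vmin = none) ∧
    (∀ (i n : ℕ) (v : V), rid i v = rid i vmin →
      parIter (par i) n v = some vmin →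
      n = G.dist v vmin ∧ n ≤ D) :=
  min_subtree_shortest_paths_general G idv vmin hmin rid par h0 hp0 hupd D hD
end

section
/- In the minimum-propagation process with parent pointers on a finite graph, at the end of every round, for every directed path v_1 → v_2 → … → v_t in the parent-pointer graph (each v_j's parent is v_{j+1}), the current values satisfy rid(v_1) ≥ rid(v_2) ≥ … ≥ rid(v_t). -/
/-! The parent of `v` is always a vertex whose value was at most `rid v` when the pointer was set:
at that moment `rid v` became equal to the parent's value, and afterwards `rid v` stays put until
the pointer changes while the parent's value can only decrease. So "every vertex's value is at least
its parent's" is preserved by each round, and chaining it along a path gives the claim. -/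

section

variable {V α : Type*} [Preorder α]

/-- One round of minimum propagation at `v`, from values `r` and parents `p` to `r'` and `p'`. -/
def MinPropagationStep (G : SimpleGraph V) (r r' : V → α) (p p' : V → Option V) (v : V) : Prop :=
  (∃ u, G.Adj v u ∧ r u < r v ∧ (∀ w, G.Adj v w → r u ≤ r w) ∧ r' v = r u ∧ p' v = some u) ∨
    ((∀ w, G.Adj v w → r v ≤ r w) ∧ r' v = r v ∧ p' v = p v)

def ParentValueLE (r : V → α) (p : V → Option V) : Prop :=
  ∀ a b, p a = some b → r b ≤ r a

namespace MinPropagationStep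

variable {G : SimpleGraph V} {r r' : V → α} {p p' : V → Option V}

theorem le {v : V} (h : MinPropagationStep G r r' p p' v) : r' v ≤ r v := by
  rcases h with ⟨u, -, hlt, -, hval, -⟩ | ⟨-, hval, -⟩
  · exact hval ▸ hlt.le
  · exact hval.le

theorem parentValueLE (h : ∀ v, MinPropagationStep G r r' p p' v) (hp : ParentValueLE r p) :
    ParentValueLE r' p' := by
  intro a b hab
  rcases h a with ⟨u, -, -, -, hval, hpar⟩ | ⟨-, hval, hpar⟩
  · obtain rfl : u = b := Option.some.inj (hpar.symm.trans hab)
    exact hval ▸ (h u).le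
  · calc r' b ≤ r b := (h b).le
      _ ≤ r a := hp a b (hpar ▸ hab)
      _ = r' a := hval.symm

end MinPropagationStep

theorem ParentValueLE.le_of_reflTransGen {r : V → α} {p : V → Option V} (hp : ParentValueLE r p)
    {v u : V} (hvu : Relation.ReflTransGen (fun a b => p a = some b) v u) : r u ≤ r v :=
  Relation.reflTransGen_eq_self (r := (· ≥ ·)).le _ _ (hvu.lift r hp)

end

theorem rid_nonincreasing_along_paths_general {V : Type*}
    (G : SimpleGraph V)
    (rid : ℕ → V → ℕ) (par : ℕ → V → Option V)
    (hp0 : ∀ v : V, par 0 v = none)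
    (hupd : ∀ (i : ℕ) (v : V),
      (∃ u : V, G.Adj v u ∧ rid i u < rid i v ∧
        (∀ w : V, G.Adj v w → rid i u ≤ rid i w) ∧
        rid (i + 1) v = rid i u ∧ par (i + 1) v = some u) ∨
      ((∀ w : V, G.Adj v w → rid i v ≤ rid i w) ∧
        rid (i + 1) v = rid i v ∧ par (i + 1) v = par i v)) :
    ∀ (i : ℕ) (v u : V),
      Relation.ReflTransGen (fun a b => par i a = some b) v u →
      rid i u ≤ rid i v := by
  have hinv : ∀ i, ParentValueLE (rid i) (par i) := by
    intro i
    induction i with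
    | zero => simp [ParentValueLE, hp0]
    | succ i ih => exact MinPropagationStep.parentValueLE (hupd i) ih
  exact fun i v u hvu => (hinv i).le_of_reflTransGen hvu

/-- In the minimum-propagation process with parent pointers on a finite graph
(a vertex adopts a minimizing strictly-smaller neighbor as parent, else keeps
its value and parent), at the end of every round the values `rid` are
non-increasing along every directed parent-pointer path. -/
theorem rid_nonincreasing_along_paths {V : Type*} [Fintype V]
    (G : SimpleGraph V)
    (idv : V → ℕ) (rid : ℕ → V → ℕ) (par : ℕ → V → Option V)
    (h0 : ∀ v : V, rid 0 v = idv v) (hp0 : ∀ v : V, par 0 v = none)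
    (hupd : ∀ (i : ℕ) (v : V),
      (∃ u : V, G.Adj v u ∧ rid i u < rid i v ∧
        (∀ w : V, G.Adj v w → rid i u ≤ rid i w) ∧
        rid (i + 1) v = rid i u ∧ par (i + 1) v = some u) ∨
      ((∀ w : V, G.Adj v w → rid i v ≤ rid i w) ∧
        rid (i + 1) v = rid i v ∧ par (i + 1) v = par i v)) :
    ∀ (i : ℕ) (v u : V),
      Relation.ReflTransGen (fun a b => par i a = some b) v u →
      rid i u ≤ rid i v :=
  rid_nonincreasing_along_paths_general G rid par hp0 hupd
end

section
/- Fix integers B ≥ 1, L ≥ 1 and set M = ⌈L/B⌉ and P = ⌈(log₂ M)/B⌉ (assume P ≥ 1). In the pipelined broadcast of an L-bit string over a path of length d, where in each iteration the next P of the M pieces are forwarded one hop, the last piece of the string arrives at the far end of the path after at most d + ⌈M/P⌉ − 1 iterations. -/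
/-!
Group the pieces into waves of `P` consecutive pieces; piece `m` belongs to wave `(m - 1) / P`.
By induction on time, a piece of wave `k` is at node at least `min d (t - k)` after iteration `t`:
when it sits exactly at node `t - k < d`, every piece of an earlier wave is strictly ahead of it,
so the only pieces before it at its node are the fewer than `P` earlier pieces of its own wave,
and it advances. The last wave is `⌈M/P⌉ - 1`, hence everything arrives by `d + ⌈M/P⌉ - 1`.
-/

/-- `pos t m` is the node holding piece `m` (for `1 ≤ m ≤ M`) after iteration `t`. -/
structure IsPipelineRun (d M P : ℕ) (pos : ℕ → ℕ → ℕ) : Prop where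
  start : ∀ m, pos 0 m = 0
  step : ∀ t m, 1 ≤ m → m ≤ M →
    pos (t + 1) m =
      if pos t m < d ∧ ((Finset.Ico 1 m).filter (fun m' => pos t m' = pos t m)).card < P
      then pos t m + 1 else pos t m

theorem card_filter_div_le_div_lt {P : ℕ} (hP : 0 < P) (m : ℕ) :
    ((Finset.Ico 1 m).filter (fun m' => (m - 1) / P ≤ (m' - 1) / P)).card < P := by
  set k := (m - 1) / P
  have hsub : (Finset.Ico 1 m).filter (fun m' => k ≤ (m' - 1) / P) ⊆ Finset.Ico (k * P + 1) m := by
    intro m' hm'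
    simp only [Finset.mem_filter, Finset.mem_Ico] at hm' ⊢
    have : k * P ≤ m' - 1 :=
      (Nat.mul_le_mul_right P hm'.2).trans (Nat.div_mul_le_self (m' - 1) P)
    omega
  have hdecomp : (m - 1) % P + P * k = m - 1 := Nat.mod_add_div (m - 1) P
  have hmod : (m - 1) % P < P := Nat.mod_lt _ hP
  have := Finset.card_le_card hsub
  rw [Nat.card_Ico] at this
  rw [Nat.mul_comm] at hdecomp
  omega

namespace IsPipelineRun

variable {d M P : ℕ} {pos : ℕ → ℕ → ℕ}

theorem pos_le_pos_succ (h : IsPipelineRun d M P pos) {m : ℕ} (h1 : 1 ≤ m) (hM : m ≤ M)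
    (t : ℕ) : pos t m ≤ pos (t + 1) m := by
  rw [h.step t m h1 hM]
  split_ifs <;> omega

theorem pos_le (h : IsPipelineRun d M P pos) {m : ℕ} (h1 : 1 ≤ m) (hM : m ≤ M) (t : ℕ) :
    pos t m ≤ d := by
  induction t with
  | zero => simp [h.start]
  | succ t ih =>
    rw [h.step t m h1 hM]
    split_ifs <;> omega

theorem min_sub_wave_le_pos (h : IsPipelineRun d M P pos) (hP : 0 < P) (t : ℕ) :
    ∀ m, 1 ≤ m → m ≤ M → min d (t - (m - 1) / P) ≤ pos t m := by
  induction t with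
  | zero => simp
  | succ t ih =>
    intro m h1 hM
    set k := (m - 1) / P
    have hmono := h.pos_le_pos_succ h1 hM t
    by_cases hahead : min d (t + 1 - k) ≤ pos t m
    · exact hahead.trans hmono
    have hpos : pos t m = t - k ∧ k ≤ t ∧ t - k < d := by
      have := ih m h1 hM
      omega
    -- pieces of earlier waves are strictly ahead of piece `m`
    have hsame : (Finset.Ico 1 m).filter (fun m' => pos t m' = pos t m) ⊆
        (Finset.Ico 1 m).filter (fun m' => k ≤ (m' - 1) / P) := by
      intro m' hm'
      simp only [Finset.mem_filter, Finset.mem_Ico] at hm' ⊢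
      refine ⟨hm'.1, ?_⟩
      have := ih m' hm'.1.1 (by omega)
      omega
    have hadvance : pos (t + 1) m = pos t m + 1 := by
      rw [h.step t m h1 hM, if_pos
        ⟨by omega, (Finset.card_le_card hsame).trans_lt (card_filter_div_le_div_lt hP m)⟩]
    omega

theorem pos_eq_of_le (h : IsPipelineRun d M P pos) (hP : 0 < P) {m : ℕ} (h1 : 1 ≤ m)
    (hM : m ≤ M) {t : ℕ} (ht : d + (M + P - 1) / P - 1 ≤ t) : pos t m = d := by
  have hlast : (M + P - 1) / P = (M - 1) / P + 1 := by
    rw [show M + P - 1 = M - 1 + P by omega, Nat.add_div_right _ hP]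
  have hwave : (m - 1) / P ≤ (M - 1) / P := Nat.div_le_div_right (by omega)
  have := h.min_sub_wave_le_pos hP t m h1 hM
  have := h.pos_le h1 hM t
  omega

end IsPipelineRun

theorem pipelined_broadcast_general (d : ℕ)
    (M P : ℕ)
    (hP1 : 1 ≤ P)
    (pos : ℕ → ℕ → ℕ)
    (h0 : ∀ m : ℕ, pos 0 m = 0)
    (hstep : ∀ (t m : ℕ), 1 ≤ m → m ≤ M →
      pos (t + 1) m =
        if pos t m < d ∧
            ((Finset.Ico 1 m).filter (fun m' => pos t m' = pos t m)).card < P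
        then pos t m + 1 else pos t m) :
    ∀ m : ℕ, 1 ≤ m → m ≤ M → pos (d + (M + P - 1) / P - 1) m = d :=
  fun _ h1 hM => (IsPipelineRun.mk h0 hstep).pos_eq_of_le hP1 h1 hM le_rfl

/-- Pipelined broadcast bound: an `L`-bit string is divided into `M = ⌈L/B⌉`
pieces, of which `P = ⌈(log₂ M)/B⌉` can be forwarded one hop per iteration.
`pos t m` is the node (on a directed path with `d` edges) holding piece `m`
after iteration `t`: a piece advances one hop in an iteration iff it has not
reached the end and fewer than `P` earlier pieces sit at the same node (each
node forwards the next `P` pieces it holds, in order). Then after at most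
`d + ⌈M/P⌉ − 1` iterations every piece — in particular the last one — has
arrived at the far end of the path. -/
theorem pipelined_broadcast (B L d : ℕ) (hB : 1 ≤ B) (hL : 1 ≤ L)
    (M P : ℕ) (hM : M = (L + B - 1) / B) (hP : P = (Nat.clog 2 M + B - 1) / B)
    (hP1 : 1 ≤ P)
    (pos : ℕ → ℕ → ℕ)
    (h0 : ∀ m : ℕ, pos 0 m = 0)
    (hstep : ∀ (t m : ℕ), 1 ≤ m → m ≤ M →
      pos (t + 1) m =
        if pos t m < d ∧
            ((Finset.Ico 1 m).filter (fun m' => pos t m' = pos t m)).card < P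
        then pos t m + 1 else pos t m) :
    ∀ m : ℕ, 1 ≤ m → m ≤ M → pos (d + (M + P - 1) / P - 1) m = d :=
  pipelined_broadcast_general d M P hP1 pos h0 hstep
end
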